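/- Consider the KbiG model M on the crisp frame with worlds W = {1,2,3,…} and accessibility relation nRn' iff n' = n+1, with valuation v(p,n) = 1/(n+1) (and arbitrary values for other variables). Then for every n ∈ W: v(∼∼(p → ◇p), n) = 1 and v(∼∼(p ⧀ ◇p), n) = 1; in particular v(∼∼(p → ◇p) ∧ ∼∼(p ⧀ ◇p), n) = 1 at every world. -/

import Mathlib

/- Truth values: the real unit interval [0,1] with its complete lattice structure
   (so `sInf ∅ = 1` and `sSup ∅ = 0`). -/
instance : Fact ((0:ℝ) ≤ 1) := ⟨zero_le_one⟩

abbrev TV : Type := unitInterval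

/-- Gödel implication: `a →G b = 1` if `a ≤ b`, else `b`. -/
noncomputable def gimp (a b : TV) : TV := if a ≤ b then 1 else b

/-- Gödel coimplication: `a ⧀G b = 0` if `a ≤ b`, else `a`. -/
noncomputable def gcoimp (a b : TV) : TV := if a ≤ b then 0 else a

/-- ¬-free formulas: the language `biL_{□,◇}` over the countable variable set `ℕ`. -/
inductive FormulaB : Type
  | var : ℕ → FormulaB
  | and : FormulaB → FormulaB → FormulaB
  | or : FormulaB → FormulaB → FormulaB
  | imp : FormulaB → FormulaB → FormulaB
  | coimp : FormulaB → FormulaB → FormulaB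
  | box : FormulaB → FormulaB
  | dia : FormulaB → FormulaB

/-- KbiG valuation on a crisp frame `(W, R)` (`inf ∅ = 1`, `sup ∅ = 0`). -/
noncomputable def bval {W : Type} (R : W → W → Prop) (v : ℕ → W → TV) :
    FormulaB → W → TV
  | .var p, w => v p w
  | .and φ ψ, w => bval R v φ w ⊓ bval R v ψ w
  | .or φ ψ, w => bval R v φ w ⊔ bval R v ψ w
  | .imp φ ψ, w => gimp (bval R v φ w) (bval R v ψ w)
  | .coimp φ ψ, w => gcoimp (bval R v φ w) (bval R v ψ w)
  | .box φ, w => sInf ((fun w' => bval R v φ w') '' {w' | R w w'})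
  | .dia φ, w => sSup ((fun w' => bval R v φ w') '' {w' | R w w'})

/-- `𝟏 := p → p`. -/
def bone : FormulaB := .imp (.var 0) (.var 0)

/-- `𝟎 := p ⧀ p`. -/
def bzero : FormulaB := .coimp (.var 0) (.var 0)

/-- Gödel negation `∼φ := φ → 𝟎`. -/
def bnegG (φ : FormulaB) : FormulaB := .imp φ bzero

/-- Baaz delta `Δτ := ∼(𝟏 ⧀ τ)`. -/
def bDelta (τ : FormulaB) : FormulaB := bnegG (.coimp bone τ)

/-- The formula `𝟏 ⧀ ◇((p ⧀ q) ∧ q)` with `p := var 0`, `q := var 1`. -/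
def phiFin : FormulaB := .coimp bone (.dia (.and (.coimp (.var 0) (.var 1)) (.var 1)))

/-- `φ^≤ := ∼∼(p → ◇p)`. -/
def phiLe : FormulaB := bnegG (bnegG (.imp (.var 0) (.dia (.var 0))))

/-- `φ^> := ∼∼(p ⧀ ◇p)`. -/
def phiGt : FormulaB := bnegG (bnegG (.coimp (.var 0) (.dia (.var 0))))

/-- The value `1/(n+1) ∈ [0,1]` for `n ∈ {1,2,…}`. -/
noncomputable def pv (n : ℕ+) : TV :=
  ⟨1 / (((n : ℕ) : ℝ) + 1), by
    constructor
    · positivity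
    · rw [div_le_one (by positivity)]
      have h : (1:ℝ) ≤ ((n : ℕ) : ℝ) := by exact_mod_cast n.one_le
      linarith⟩

section KbiG

variable {W : Type} (R : W → W → Prop) (v : ℕ → W → TV)

lemma bval_bzero (w : W) : bval R v bzero w = 0 := by
  simp [bval, bzero, gcoimp]

lemma bval_bnegG_bnegG_of_ne_zero {φ : FormulaB} {w : W} (h : bval R v φ w ≠ 0) :
    bval R v (bnegG (bnegG φ)) w = 1 := by
  simp only [bnegG, bval, bval_bzero, gimp, le_zero_iff, h, if_false, le_refl, if_true]

lemma bval_dia_of_setOf_eq_singleton {φ : FormulaB} {w u : W} (h : {w' | R w w'} = {u}) :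
    bval R v (.dia φ) w = bval R v φ u := by
  simp only [bval, h, Set.image_singleton, sSup_singleton]

end KbiG

lemma gimp_ne_zero {a b : TV} (hb : b ≠ 0) : gimp a b ≠ 0 := by
  unfold gimp
  split_ifs
  exacts [one_ne_zero, hb]

lemma gcoimp_ne_zero {a b : TV} (hba : b < a) : gcoimp a b ≠ 0 := by
  rw [gcoimp, if_neg (not_le.mpr hba)]
  exact (hba.trans_le' unitInterval.nonneg').ne'

lemma pv_pos (n : ℕ+) : 0 < pv n := by
  show (0 : ℝ) < 1 / _
  positivity

lemma pv_strictAnti : StrictAnti pv := by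
  intro m n hmn
  show (1 : ℝ) / _ < 1 / _
  gcongr
  exact_mod_cast hmn

theorem stmt8 (R : ℕ+ → ℕ+ → Prop) (hR : ∀ n n' : ℕ+, R n n' ↔ n' = n + 1)
    (v : ℕ → ℕ+ → TV) (hv : ∀ n : ℕ+, v 0 n = pv n) (n : ℕ+) :
    bval R v phiLe n = 1 ∧ bval R v phiGt n = 1 ∧
    bval R v (.and phiLe phiGt) n = 1 := by
  have hsucc : {w' | R n w'} = {n + 1} := by
    ext w'
    simp [hR]
  have hp : bval R v (.var 0) n = pv n := hv n
  have hdia : bval R v (.dia (.var 0)) n = pv (n + 1) :=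
    (bval_dia_of_setOf_eq_singleton R v hsucc).trans (hv _)
  have hdrop : pv (n + 1) < pv n := pv_strictAnti (PNat.lt_add_right n 1)
  have hLe : bval R v phiLe n = 1 := by
    refine bval_bnegG_bnegG_of_ne_zero R v ?_
    rw [bval, hp, hdia]
    exact gimp_ne_zero (pv_pos _).ne'
  have hGt : bval R v phiGt n = 1 := by
    refine bval_bnegG_bnegG_of_ne_zero R v ?_
    rw [bval, hp, hdia]
    exact gcoimp_ne_zero hdrop
  exact ⟨hLe, hGt, by simp only [bval, hLe, hGt, inf_idem]⟩
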